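/- Let μ ∈ V be dominant, and let w ∈ W be such that w(μ − ρ) = {μ − ρ} is dominant, with reduced expression w = s_{γ₁}⋯s_{γ_n} into simple reflections. Then {μ − ρ} − (μ − ρ) = Σ_{k=1}^n ⟨ρ − μ, γ_k∨⟩ β_k, where β_k := s_{γ₁}⋯s_{γ_{k−1}}(γ_k) is a positive root for each k, and each coefficient satisfies ⟨ρ − μ, γ_k∨⟩ ≤ 1. -/

import Mathlib

/-!
Write `w = s_{γ₁} ⋯ s_{γₙ}` and `λ = μ - ρ`. The difference `w λ - λ` telescopes into
`Σ_k s_{γ₁} ⋯ s_{γ_{k-1}} (s_{γ_k} λ - λ)`, and `s_{γ_k} λ - λ = ⟨-λ, γ_k∨⟩ γ_k`, which gives the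
formula. The roots `β_k` are positive because the expression is reduced: if `β_k` were negative,
the deletion property (which rests on `s_i` permuting the positive roots other than `α_i`) would
absorb `s_{γ_k}` into `s_{γ₁} ⋯ s_{γ_{k-1}}` at the cost of one letter, shortening the
expression by two. The coefficient bound is `⟨ρ, α_i∨⟩ = 1` together with dominance of `μ`.
-/

open scoped RealInnerProductSpace

noncomputable section

/-- The pairing `⟨v, a∨⟩ = 2⟪v,a⟫/⟪a,a⟫` of `v` against the coroot of `a`. -/
def copair {V : Type*} [NormedAddCommGroup V] [InnerProductSpace ℝ V] (v a : V) : ℝ :=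
  2 * ⟪v, a⟫ / ⟪a, a⟫

/-- The orthogonal reflection `s_a` in the hyperplane orthogonal to `a`,
as a linear isometry of `V`. -/
def sRefl {V : Type*} [NormedAddCommGroup V] [InnerProductSpace ℝ V] [FiniteDimensional ℝ V]
    (a : V) : V ≃ₗᵢ[ℝ] V :=
  Submodule.reflection (ℝ ∙ a)ᗮ

/-- A finite crystallographic reduced root system `Φ` spanning a finite-dimensional real inner
product space `V`, together with a choice of positive roots `pos`, simple roots `sroot`,
and fundamental weights `fw`. -/
structure RootSystemCtx (V : Type*) [NormedAddCommGroup V] [InnerProductSpace ℝ V]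
    [FiniteDimensional ℝ V] where
  l : ℕ
  Φ : Finset V
  pos : Finset V
  sroot : Fin l → V
  fw : Fin l → V
  nonzero : ∀ a ∈ Φ, a ≠ (0 : V)
  span_top : Submodule.span ℝ (Φ : Set V) = ⊤
  reduced : ∀ a ∈ Φ, ∀ t : ℝ, t • a ∈ Φ → t = 1 ∨ t = -1
  refl_mem : ∀ a ∈ Φ, ∀ b ∈ Φ, sRefl a b ∈ Φ
  crystal : ∀ a ∈ Φ, ∀ b ∈ Φ, ∃ n : ℤ, copair b a = (n : ℝ)
  pos_subset : pos ⊆ Φ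
  mem_pos_or : ∀ a ∈ Φ, (a ∈ pos ∧ -a ∉ pos) ∨ (a ∉ pos ∧ -a ∈ pos)
  sroot_mem : ∀ i, sroot i ∈ pos
  sroot_indep : LinearIndependent ℝ sroot
  pos_nat_comb : ∀ a ∈ pos, ∃ c : Fin l → ℕ, a = ∑ i, (c i : ℝ) • sroot i
  fw_pairing : ∀ i j, copair (fw i) (sroot j) = if i = j then 1 else 0

namespace RootSystemCtx

variable {V : Type*} [NormedAddCommGroup V] [InnerProductSpace ℝ V] [FiniteDimensional ℝ V]
variable (R : RootSystemCtx V)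

/-- The half sum of the positive roots, `ρ = Σ_i ϖ_i`. -/
def rho : V := ∑ i, R.fw i

/-- The Weyl group `W`, the subgroup of the isometry group of `V` generated by the
reflections in the roots. -/
def weylGroup : Subgroup (V ≃ₗᵢ[ℝ] V) :=
  Subgroup.closure {g | ∃ a ∈ R.Φ, g = sRefl a}

/-- `γ` is an expression of `w` as a product of simple reflections. -/
def IsExpression (w : V ≃ₗᵢ[ℝ] V) (γ : List (Fin R.l)) : Prop :=
  w = (γ.map fun i => sRefl (R.sroot i)).prod

/-- `γ` is a reduced expression of `w`: an expression of minimal possible length. -/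
def IsReducedExpression (w : V ≃ₗᵢ[ℝ] V) (γ : List (Fin R.l)) : Prop :=
  R.IsExpression w γ ∧ ∀ γ' : List (Fin R.l), R.IsExpression w γ' → γ.length ≤ γ'.length

/-- A weight is dominant if it pairs nonnegatively with every simple coroot. -/
def IsDominant (v : V) : Prop := ∀ i, 0 ≤ copair v (R.sroot i)

/-- `d` is the dominant representative `{v}` of the Weyl group orbit of `v`. -/
def IsDomRep (v d : V) : Prop := R.IsDominant d ∧ ∃ w ∈ R.weylGroup, w v = d

end RootSystemCtx

section Reflections

variable {V : Type*} [NormedAddCommGroup V] [InnerProductSpace ℝ V]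

theorem copair_sub_left (x y a : V) : copair (x - y) a = copair x a - copair y a := by
  simp only [copair, inner_sub_left]; ring

theorem copair_neg_left (x a : V) : copair (-x) a = -copair x a := by
  simp only [copair, inner_neg_left]; ring

theorem copair_sum_left {ι : Type*} (s : Finset ι) (x : ι → V) (a : V) :
    copair (∑ i ∈ s, x i) a = ∑ i ∈ s, copair (x i) a := by
  simp only [copair, sum_inner, Finset.mul_sum, Finset.sum_div]

theorem copair_map (u : V ≃ₗᵢ[ℝ] V) (x a : V) : copair (u x) (u a) = copair x a := by
  simp only [copair, u.inner_map_map]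

variable [FiniteDimensional ℝ V]

theorem sRefl_apply (a x : V) : sRefl a x = x - copair x a • a := by
  rw [sRefl, Submodule.reflection_orthogonal_apply, Submodule.reflection_singleton_apply,
    copair, real_inner_self_eq_norm_sq, real_inner_comm]
  simp only [RCLike.ofReal_real_eq_id, id]
  rw [neg_sub, ← Nat.cast_smul_eq_nsmul ℝ, smul_smul, Nat.cast_ofNat, mul_div_assoc]

theorem sRefl_mul_self (a : V) : sRefl a * sRefl a = 1 :=
  Submodule.reflection_mul_reflection _

theorem sRefl_map_mul (u : V ≃ₗᵢ[ℝ] V) (a : V) : sRefl (u a) * u = u * sRefl a := by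
  ext x
  change sRefl (u a) (u x) = u (sRefl a x)
  rw [sRefl_apply, sRefl_apply, copair_map, map_sub, map_smul]

def reflProd {ι : Type*} (f : ι → V) (l : List ι) : V ≃ₗᵢ[ℝ] V :=
  (l.map fun i => sRefl (f i)).prod

variable {ι : Type*} (f : ι → V)

@[simp]
theorem reflProd_nil : reflProd f [] = 1 := rfl

@[simp]
theorem reflProd_cons (i : ι) (l : List ι) : reflProd f (i :: l) = sRefl (f i) * reflProd f l :=
  List.prod_cons

@[simp]
theorem reflProd_append (l l' : List ι) : reflProd f (l ++ l') = reflProd f l * reflProd f l' := by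
  simp [reflProd]

theorem sRefl_apply_sub_self (a x : V) : sRefl a x - x = copair (-x) a • a := by
  rw [sRefl_apply, copair_neg_left, neg_smul]; abel

theorem reflProd_apply_sub_self (l : List ι) (x : V) :
    reflProd f l x - x = ∑ k : Fin l.length,
      copair (-x) (f (l.get k)) • reflProd f (l.take k) (f (l.get k)) := by
  induction l with
  | nil => simp
  | cons i l ih =>
    have hsplit : reflProd f (i :: l) x - x
        = sRefl (f i) (reflProd f l x - x) + (sRefl (f i) x - x) := by
      rw [reflProd_cons, map_sub]; exact (sub_add_sub_cancel _ _ _).symm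
    rw [hsplit, ih, sRefl_apply_sub_self, map_sum, add_comm]
    refine Eq.trans ?_ (Fin.sum_univ_succ (n := l.length) _).symm
    congr 1
    refine Finset.sum_congr rfl fun k _ => ?_
    simp

end Reflections

namespace RootSystemCtx

variable {V : Type*} [NormedAddCommGroup V] [InnerProductSpace ℝ V] [FiniteDimensional ℝ V]
variable (R : RootSystemCtx V)

theorem sroot_mem_Φ (i : Fin R.l) : R.sroot i ∈ R.Φ := R.pos_subset (R.sroot_mem i)

theorem copair_rho_sroot (i : Fin R.l) : copair R.rho (R.sroot i) = 1 := by
  simp [rho, copair_sum_left, R.fw_pairing]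

theorem copair_rho_sub_le_one {μ : V} (hμ : R.IsDominant μ) (i : Fin R.l) :
    copair (R.rho - μ) (R.sroot i) ≤ 1 := by
  rw [copair_sub_left, copair_rho_sroot]
  linarith [hμ i]

variable {R}

theorem eq_sroot_of_coeff_eq_zero {b : V} (hb : b ∈ R.pos) {c : Fin R.l → ℕ}
    (hc : b = ∑ j, (c j : ℝ) • R.sroot j) {i : Fin R.l} (hci : ∀ j ≠ i, c j = 0) :
    b = R.sroot i := by
  have hb' : b = (c i : ℝ) • R.sroot i := by
    rw [hc, Finset.sum_eq_single_of_mem i (Finset.mem_univ i)]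
    intro j _ hji
    simp [hci j hji]
  rcases R.reduced _ (R.sroot_mem_Φ i) _ (hb' ▸ R.pos_subset hb) with h | h
  · rw [hb', h, one_smul]
  · linarith [(c i).cast_nonneg (α := ℝ)]

theorem coeff_eq_zero_of_sRefl_not_mem_pos {b : V} (hb : b ∈ R.pos) {c : Fin R.l → ℕ}
    (hc : b = ∑ j, (c j : ℝ) • R.sroot j) {i : Fin R.l} (h : sRefl (R.sroot i) b ∉ R.pos)
    {j : Fin R.l} (hji : j ≠ i) : c j = 0 := by
  have hneg : -sRefl (R.sroot i) b ∈ R.pos :=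
    ((R.mem_pos_or _ (R.refl_mem _ (R.sroot_mem_Φ i) b (R.pos_subset hb))).resolve_left
      (fun h' => h h'.1)).2
  obtain ⟨d, hd⟩ := R.pos_nat_comb _ hneg
  -- `b + (-s_i b) = ⟨b, α_i∨⟩ α_i` has nonnegative coordinates, so those away from `i` vanish.
  have hsum : ∑ k, ((c k : ℝ) + d k) • R.sroot k
      = ∑ k, (if k = i then copair b (R.sroot i) else 0) • R.sroot k := by
    simp only [add_smul, Finset.sum_add_distrib, ← hc, ← hd, ite_smul, zero_smul,
      Finset.sum_ite_eq', Finset.mem_univ, if_true, sRefl_apply]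
    abel
  have hj := R.sroot_indep.eq_coords_of_eq hsum j
  rw [if_neg hji] at hj
  have : (c j : ℝ) = 0 := by linarith [(c j).cast_nonneg (α := ℝ), (d j).cast_nonneg (α := ℝ)]
  exact_mod_cast this

theorem eq_sroot_of_sRefl_not_mem_pos {b : V} (hb : b ∈ R.pos) {i : Fin R.l}
    (h : sRefl (R.sroot i) b ∉ R.pos) : b = R.sroot i := by
  obtain ⟨c, hc⟩ := R.pos_nat_comb b hb
  exact eq_sroot_of_coeff_eq_zero hb hc fun j hji =>
    coeff_eq_zero_of_sRefl_not_mem_pos hb hc h hji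

variable (R)

theorem exists_reflProd_mul_sRefl_eq (l : List (Fin R.l)) {j : Fin R.l}
    (h : reflProd R.sroot l (R.sroot j) ∉ R.pos) :
    ∃ l' : List (Fin R.l), l'.length + 1 = l.length ∧
      reflProd R.sroot l * sRefl (R.sroot j) = reflProd R.sroot l' := by
  induction l with
  | nil => exact absurd (R.sroot_mem j) h
  | cons i l ih =>
    by_cases hl : reflProd R.sroot l (R.sroot j) ∈ R.pos
    · have hi : reflProd R.sroot l (R.sroot j) = R.sroot i :=
        eq_sroot_of_sRefl_not_mem_pos hl (by simpa using h)
      refine ⟨l, rfl, ?_⟩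
      rw [reflProd_cons, ← hi, sRefl_map_mul, mul_assoc, sRefl_mul_self, mul_one]
    · obtain ⟨l', hlen, hl'⟩ := ih hl
      exact ⟨i :: l', by simp [hlen], by rw [reflProd_cons, reflProd_cons, mul_assoc, hl']⟩

theorem IsReducedExpression.reflProd_take_sroot_mem_pos {w : V ≃ₗᵢ[ℝ] V} {γ : List (Fin R.l)}
    (hred : R.IsReducedExpression w γ) (k : Fin γ.length) :
    reflProd R.sroot (γ.take k) (R.sroot (γ.get k)) ∈ R.pos := by
  by_contra h
  obtain ⟨l', hlen, hl'⟩ := R.exists_reflProd_mul_sRefl_eq (γ.take k) h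
  have hγ : γ = γ.take k ++ γ.get k :: γ.drop (k + 1) := by
    rw [List.get_eq_getElem, ← List.drop_eq_getElem_cons k.isLt, List.take_append_drop]
  have hexp : R.IsExpression w (l' ++ γ.drop (k + 1)) := by
    change w = reflProd R.sroot _
    rw [hred.1, reflProd_append, ← hl', mul_assoc, ← reflProd_cons, ← reflProd_append, ← hγ]
    rfl
  have := hred.2 _ hexp
  simp only [List.length_append, List.length_drop, List.length_take] at this hlen
  omega

end RootSystemCtx

theorem statement14_general {V : Type*} [NormedAddCommGroup V] [InnerProductSpace ℝ V]
    [FiniteDimensional ℝ V] (R : RootSystemCtx V)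
    (μ : V) (hμ : R.IsDominant μ)
    (w : V ≃ₗᵢ[ℝ] V)
    (γ : List (Fin R.l)) (hred : R.IsReducedExpression w γ) :
    (∀ k : Fin γ.length,
      ((γ.take (k : ℕ)).map fun i => sRefl (R.sroot i)).prod (R.sroot (γ.get k)) ∈ R.pos) ∧
    (∀ k : Fin γ.length, copair (R.rho - μ) (R.sroot (γ.get k)) ≤ 1) ∧
    w (μ - R.rho) - (μ - R.rho) = ∑ k : Fin γ.length,
      copair (R.rho - μ) (R.sroot (γ.get k)) •
        (((γ.take (k : ℕ)).map fun i => sRefl (R.sroot i)).prod (R.sroot (γ.get k))) := by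
  refine ⟨hred.reflProd_take_sroot_mem_pos, fun k => R.copair_rho_sub_le_one hμ _, ?_⟩
  rw [hred.1, ← neg_sub μ]
  exact reflProd_apply_sub_self R.sroot γ (μ - R.rho)

/-- Let `μ` be dominant and let `w ∈ W` be such that `w(μ − ρ) = {μ − ρ}` is
dominant, with reduced expression `w = s_{γ₁}⋯s_{γ_n}`.  Then
`{μ − ρ} − (μ − ρ) = Σ_k ⟨ρ − μ, γ_k∨⟩ • β_k`, where each `β_k := s_{γ₁}⋯s_{γ_{k−1}}(γ_k)`
is a positive root and each coefficient satisfies `⟨ρ − μ, γ_k∨⟩ ≤ 1`. -/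
theorem statement14 {V : Type*} [NormedAddCommGroup V] [InnerProductSpace ℝ V]
    [FiniteDimensional ℝ V] (R : RootSystemCtx V)
    (μ : V) (hμ : R.IsDominant μ)
    (w : V ≃ₗᵢ[ℝ] V) (hw : w ∈ R.weylGroup) (hdom : R.IsDominant (w (μ - R.rho)))
    (γ : List (Fin R.l)) (hred : R.IsReducedExpression w γ) :
    (∀ k : Fin γ.length,
      ((γ.take (k : ℕ)).map fun i => sRefl (R.sroot i)).prod (R.sroot (γ.get k)) ∈ R.pos) ∧
    (∀ k : Fin γ.length, copair (R.rho - μ) (R.sroot (γ.get k)) ≤ 1) ∧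
    w (μ - R.rho) - (μ - R.rho) = ∑ k : Fin γ.length,
      copair (R.rho - μ) (R.sroot (γ.get k)) •
        (((γ.take (k : ℕ)).map fun i => sRefl (R.sroot i)).prod (R.sroot (γ.get k))) :=
  statement14_general R μ hμ w γ hred
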